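/- There is a constant C > 0 such that for every radial Schwartz function f on ℝ³ and every x ∈ ℝ³, ‖x‖ · |f(x)|² ≤ C ‖f‖²_{Ḣ¹}. -/

import Mathlib

noncomputable section

open MeasureTheory Real Complex FourierTransform Filter Set ENNReal

/-- Euclidean space `ℝ^d`. -/
abbrev Rd (d : ℕ) : Type := EuclideanSpace ℝ (Fin d)

/-- The Fourier transform `𝓕f(ξ) = ∫ e^{-2πi x·ξ} f(x) dx`. -/
def FT {d : ℕ} (f : Rd d → ℂ) : Rd d → ℂ := 𝓕 f

/-- The inverse Fourier transform. -/
def FTinv {d : ℕ} (f : Rd d → ℂ) : Rd d → ℂ := 𝓕⁻ f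

/-- Squared inhomogeneous Sobolev norm `‖f‖_{H^σ}² = ∫ (1+‖ξ‖²)^σ |g(ξ)|² dξ`, computed from
the frequency-side function `g = 𝓕f`. -/
def sobSq (d : ℕ) (σ : ℝ) (g : Rd d → ℂ) : ℝ≥0∞ :=
  ∫⁻ ξ : Rd d, ENNReal.ofReal ((1 + ‖ξ‖ ^ 2) ^ σ) * (‖g ξ‖₊ : ℝ≥0∞) ^ 2

/-- Squared homogeneous Sobolev norm `‖f‖_{Ḣ^σ}² = ∫ ‖ξ‖^{2σ} |g(ξ)|² dξ`, computed from
the frequency-side function `g = 𝓕f`. -/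
def dotSobSq (d : ℕ) (σ : ℝ) (g : Rd d → ℂ) : ℝ≥0∞ :=
  ∫⁻ ξ : Rd d, ENNReal.ofReal (‖ξ‖ ^ (2 * σ)) * (‖g ξ‖₊ : ℝ≥0∞) ^ 2

/-- The multiplier symbol `m_{N,s}` of the `I`-operator. -/
def mI (d : ℕ) (N s : ℝ) (ξ : Rd d) : ℝ := if ‖ξ‖ ≤ N then 1 else (N / ‖ξ‖) ^ (1 - s)

/-- The operator `I_N`, the Fourier multiplier with symbol `m_{N,s}`, realized as
`𝓕⁻(m_{N,s} · 𝓕 f)`. -/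
def IopN (d : ℕ) (N s : ℝ) (f : Rd d → ℂ) : Rd d → ℂ :=
  FTinv (fun ξ => (mI d N s ξ : ℂ) * FT f ξ)

/-- The symbol `e^{-4π² i t ‖ξ‖²}` of the free Schrödinger propagator `e^{itΔ}`. -/
def propag (d : ℕ) (t : ℝ) (ξ : Rd d) : ℂ :=
  Complex.exp (-((4 * Real.pi ^ 2 * t * ‖ξ‖ ^ 2 : ℝ) : ℂ) * Complex.I)

/-- The nonlinearity `|g|^{2k} g`. -/
def NLabs (k : ℕ) {d : ℕ} (g : Rd d → ℂ) (x : Rd d) : ℂ := (‖g x‖ : ℂ) ^ (2 * k) * g x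

/-- The energy `E_k(g) = (1/2)∫|∇g|² + (1/(2k+2))∫|g|^{2k+2}` (with `k = 1` this is the
cubic energy `E`). -/
def Energy (d k : ℕ) (g : Rd d → ℂ) : ℝ≥0∞ :=
  (1 / 2) * ∫⁻ x : Rd d, (‖fderiv ℝ g x‖₊ : ℝ≥0∞) ^ 2 +
    (1 / (2 * (k : ℝ≥0∞) + 2)) * ∫⁻ x : Rd d, (‖g x‖₊ : ℝ≥0∞) ^ (2 * k + 2)

/-- `g` is the (distributional) Fourier transform of `f`, expressed through the multiplication
formula `∫ f · 𝓕φ = ∫ g · φ` against all Schwartz functions `φ`. -/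
def IsFTPair (d : ℕ) (f g : Rd d → ℂ) : Prop :=
  ∀ φ : SchwartzMap (Rd d) ℂ, (∫ x : Rd d, f x * FT (⇑φ) x) = ∫ ξ : Rd d, g ξ * φ ξ

/-- `v : ℝ → (ℝ^d → ℂ)` is the frequency-side representation of a continuous `H²`-valued
Duhamel solution of `i∂_t u + Δ u = |u|^{2k} u` on `[a, b]`; the physical solution is
`u t = 𝓕⁻(v t)`. -/
def IsSolutionFreq (d k : ℕ) (a b : ℝ) (v : ℝ → Rd d → ℂ) : Prop :=
  (∀ t ∈ Set.Icc a b, AEStronglyMeasurable (v t) volume ∧ sobSq d 2 (v t) < ⊤) ∧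
  (∀ t₀ ∈ Set.Icc a b,
    Tendsto (fun t => sobSq d 2 (fun ξ => v t ξ - v t₀ ξ)) (nhdsWithin t₀ (Set.Icc a b)) (nhds 0)) ∧
  (∀ a' ∈ Set.Icc a b, ∀ t ∈ Set.Icc a b, ∀ᵐ ξ : Rd d ∂volume,
    v t ξ = propag d (t - a') ξ * v a' ξ -
      Complex.I * ∫ τ in a'..t, propag d (t - τ) ξ * FT (NLabs k (FTinv (v τ))) ξ)

/-!
Write a radial `f` as `f x = g ‖x‖` with `g s = f (s • e)` for a unit vector `e`. Since `g`
vanishes at infinity, `g r = -∫_r^∞ g'`, and Cauchy–Schwarz against the weight `s⁻¹`, whose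
square has integral `r⁻¹` over `(r, ∞)`, gives `r ‖g r‖² ≤ ∫_r^∞ s² ‖g' s‖²`. In polar
coordinates the right-hand side is at most `(3 |B₁|)⁻¹ ∫ ‖g' ‖y‖‖² dy`. Radiality gives
`‖g' ‖y‖‖ ≤ ‖Df y‖ ≤ (∑ᵢ ‖∂ᵢ f y‖²)^(1/2)`, and by Plancherel
`∑ᵢ ∫ ‖∂ᵢ f‖² = (2π)² ∫ ‖ξ‖² ‖𝓕 f ξ‖²`.
-/

open scoped Topology RealInnerProductSpace LineDeriv SchwartzMap
open Module

section WeightedCauchySchwarz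

theorem memLp_two_inv_Ioi {r : ℝ} (hr : 0 < r) :
    MemLp (fun s : ℝ ↦ s⁻¹) 2 (volume.restrict (Ioi r)) := by
  rw [memLp_two_iff_integrable_sq (by fun_prop)]
  refine (integrableOn_Ioi_rpow_of_lt (a := -2) (by norm_num) hr).congr_fun (fun s hs ↦ ?_)
    measurableSet_Ioi
  simp [Real.rpow_neg (hr.trans hs).le]

theorem integral_Ioi_inv_sq {r : ℝ} (hr : 0 < r) : ∫ s in Ioi r, (s⁻¹) ^ 2 = r⁻¹ := by
  rw [setIntegral_congr_fun measurableSet_Ioi (g := fun s ↦ s ^ (-2 : ℝ)) fun s hs ↦ ?_,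
    integral_Ioi_rpow_of_lt (by norm_num) hr]
  · norm_num [Real.rpow_neg_one]
  · simp [Real.rpow_neg (hr.trans hs).le]

theorem memLp_two_mul_norm_Ioi {E : Type*} [NormedAddCommGroup E] {h : ℝ → E} {r : ℝ}
    (hh : AEStronglyMeasurable h (volume.restrict (Ioi r)))
    (hint : IntegrableOn (fun s ↦ s ^ 2 * ‖h s‖ ^ 2) (Ioi r)) :
    MemLp (fun s ↦ s * ‖h s‖) 2 (volume.restrict (Ioi r)) := by
  have hmeas : AEStronglyMeasurable (fun s ↦ s * ‖h s‖) (volume.restrict (Ioi r)) :=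
    aestronglyMeasurable_id.mul hh.norm
  rw [memLp_two_iff_integrable_sq hmeas]
  simp_rw [mul_pow]
  exact hint

variable {E : Type*} [NormedAddCommGroup E] {h : ℝ → E} {r : ℝ} (hr : 0 < r)
  (hh : AEStronglyMeasurable h (volume.restrict (Ioi r)))
  (hint : IntegrableOn (fun s ↦ s ^ 2 * ‖h s‖ ^ 2) (Ioi r))
include hr hh hint

theorem integrableOn_Ioi_of_integrableOn_sq_mul_norm_sq : IntegrableOn h (Ioi r) := by
  have : ENNReal.HolderConjugate 2 2 := .of_toReal (by simpa using Real.HolderConjugate.two_two)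
  refine (integrable_norm_iff hh).1 (((memLp_two_inv_Ioi hr).integrable_mul
    (memLp_two_mul_norm_Ioi hh hint)).congr ?_)
  filter_upwards [ae_restrict_mem measurableSet_Ioi] with s (hs : r < s)
  exact inv_mul_cancel_left₀ (hr.trans hs).ne' _

theorem setIntegral_norm_le_sqrt_inv_mul :
    ∫ s in Ioi r, ‖h s‖ ≤ √(r⁻¹ * ∫ s in Ioi r, s ^ 2 * ‖h s‖ ^ 2) := by
  have hcs := integral_mul_le_Lp_mul_Lq_of_nonneg Real.HolderConjugate.two_two
    (ae_restrict_of_forall_mem measurableSet_Ioi fun s (hs : r < s) ↦ (inv_pos.2 (hr.trans hs)).le)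
    (ae_restrict_of_forall_mem measurableSet_Ioi fun s (hs : r < s) ↦
      mul_nonneg (hr.trans hs).le (norm_nonneg (h s)))
    (by simpa using memLp_two_inv_Ioi hr) (by simpa using memLp_two_mul_norm_Ioi hh hint)
  simp_rw [Real.rpow_two, mul_pow] at hcs
  rw [integral_Ioi_inv_sq hr, ← Real.sqrt_eq_rpow, ← Real.sqrt_eq_rpow,
    ← Real.sqrt_mul (inv_nonneg.2 hr.le)] at hcs
  refine (setIntegral_congr_fun measurableSet_Ioi fun s (hs : r < s) ↦ ?_).trans_le hcs
  exact (inv_mul_cancel_left₀ (hr.trans hs).ne' _).symm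

end WeightedCauchySchwarz

theorem mul_norm_sq_le_setIntegral_sq_mul_norm_deriv_sq {E : Type*} [NormedAddCommGroup E]
    [NormedSpace ℝ E] [CompleteSpace E] {g : ℝ → E} (hg : Differentiable ℝ g)
    (hlim : Tendsto g atTop (𝓝 0)) {r : ℝ} (hr : 0 ≤ r)
    (hint : IntegrableOn (fun s ↦ s ^ 2 * ‖deriv g s‖ ^ 2) (Ioi r)) :
    r * ‖g r‖ ^ 2 ≤ ∫ s in Ioi r, s ^ 2 * ‖deriv g s‖ ^ 2 := by
  rcases hr.eq_or_lt with rfl | hr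
  · rw [zero_mul]
    exact setIntegral_nonneg measurableSet_Ioi fun s _ ↦ by positivity
  have hmeas := aestronglyMeasurable_deriv g (volume.restrict (Ioi r))
  have hftc : g r = -∫ s in Ioi r, deriv g s := by
    rw [integral_Ioi_of_hasDerivAt_of_tendsto (hg r).continuousAt.continuousWithinAt
      (fun s _ ↦ (hg s).hasDerivAt) (integrableOn_Ioi_of_integrableOn_sq_mul_norm_sq hr hmeas hint)
      hlim]
    abel
  have hg_le : ‖g r‖ ≤ √(r⁻¹ * ∫ s in Ioi r, s ^ 2 * ‖deriv g s‖ ^ 2) := by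
    rw [hftc, norm_neg]
    exact (norm_integral_le_integral_norm _).trans (setIntegral_norm_le_sqrt_inv_mul hr hmeas hint)
  exact (le_inv_mul_iff₀ hr).1 ((Real.le_sqrt (norm_nonneg _) (by positivity)).1 hg_le)

section Plancherel

variable {V : Type*} [NormedAddCommGroup V] [InnerProductSpace ℝ V] [FiniteDimensional ℝ V]
  [MeasurableSpace V] [BorelSpace V]

theorem SchwartzMap.norm_fourier_lineDerivOp_apply {E : Type*} [NormedAddCommGroup E]
    [NormedSpace ℂ E] (f : 𝓢(V, E)) (m ξ : V) :
    ‖𝓕 (∂_{m} f) ξ‖ = 2 * π * |⟪ξ, m⟫| * ‖𝓕 f ξ‖ := by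
  have hm : (fun x : V ↦ ⟪x, m⟫).HasTemperateGrowth := ((innerSL ℝ).flip m).hasTemperateGrowth
  simp [SchwartzMap.fourier_lineDerivOp_eq, SchwartzMap.smulLeftCLM_apply_apply hm, norm_smul,
    abs_of_pos pi_pos, mul_assoc]

theorem SchwartzMap.sum_integral_norm_lineDerivOp_sq {H : Type*} [NormedAddCommGroup H]
    [InnerProductSpace ℂ H] [CompleteSpace H] {ι : Type*} [Fintype ι]
    (b : OrthonormalBasis ι ℝ V) (f : 𝓢(V, H)) :
    ∑ i, ∫ x, ‖∂_{b i} f x‖ ^ 2 = (2 * π) ^ 2 * ∫ ξ, ‖ξ‖ ^ 2 * ‖𝓕 f ξ‖ ^ 2 := by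
  have hint (u : 𝓢(V, H)) : Integrable (fun x ↦ ‖u x‖ ^ 2) :=
    (u.memLp 2).integrable_norm_pow two_ne_zero
  calc ∑ i, ∫ x, ‖∂_{b i} f x‖ ^ 2 = ∑ i, ∫ ξ, ‖𝓕 (∂_{b i} f) ξ‖ ^ 2 := by
        simp_rw [SchwartzMap.integral_norm_sq_fourier]
    _ = ∫ ξ, ∑ i, ‖𝓕 (∂_{b i} f) ξ‖ ^ 2 :=
        (integral_finsetSum _ fun i _ ↦ hint _).symm
    _ = ∫ ξ, (2 * π) ^ 2 * (‖ξ‖ ^ 2 * ‖𝓕 f ξ‖ ^ 2) := by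
        congr 1
        ext ξ
        simp_rw [SchwartzMap.norm_fourier_lineDerivOp_apply, mul_pow, sq_abs]
        rw [← Finset.sum_mul, ← Finset.mul_sum, b.sum_sq_inner_left]
        ring
    _ = (2 * π) ^ 2 * ∫ ξ, ‖ξ‖ ^ 2 * ‖𝓕 f ξ‖ ^ 2 := integral_const_mul _ _

end Plancherel

theorem ContinuousLinearMap.norm_sq_le_sum_norm_apply_sq {V F ι : Type*} [NormedAddCommGroup V]
    [InnerProductSpace ℝ V] [SeminormedAddCommGroup F] [NormedSpace ℝ F] [Fintype ι]
    (b : OrthonormalBasis ι ℝ V) (L : V →L[ℝ] F) : ‖L‖ ^ 2 ≤ ∑ i, ‖L (b i)‖ ^ 2 := by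
  suffices ‖L‖ ≤ √(∑ i, ‖L (b i)‖ ^ 2) from
    (pow_le_pow_left₀ (norm_nonneg _) this 2).trans_eq (Real.sq_sqrt (by positivity))
  refine L.opNorm_le_bound (Real.sqrt_nonneg _) fun v ↦ ?_
  calc ‖L v‖ = ‖∑ i, ⟪b i, v⟫ • L (b i)‖ := by
        simp_rw [← map_smul, ← map_sum, b.sum_repr']
    _ ≤ ∑ i, |⟪b i, v⟫| * ‖L (b i)‖ := by
        refine (norm_sum_le _ _).trans_eq ?_
        simp_rw [norm_smul, Real.norm_eq_abs]
    _ ≤ √(∑ i, |⟪b i, v⟫| ^ 2) * √(∑ i, ‖L (b i)‖ ^ 2) := Real.sum_mul_le_sqrt_mul_sqrt _ _ _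
    _ = √(∑ i, ‖L (b i)‖ ^ 2) * ‖v‖ := by
        simp_rw [sq_abs, b.sum_sq_inner_right, Real.sqrt_sq (norm_nonneg v), mul_comm]

section Radial

variable {V F : Type*} [NormedAddCommGroup V] [InnerProductSpace ℝ V] [NormedAddCommGroup F]
  [NormedSpace ℝ F] {f : V → F} (hf : ∀ x y : V, ‖x‖ = ‖y‖ → f x = f y) {e : V} (he : ‖e‖ = 1)
include hf he

theorem norm_deriv_comp_smul_le_norm_fderiv {y : V} (hfy : DifferentiableAt ℝ f y) :
    ‖deriv (fun s : ℝ ↦ f (s • e)) ‖y‖‖ ≤ ‖fderiv ℝ f y‖ := by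
  obtain ⟨u, hu, hyu⟩ : ∃ u : V, ‖u‖ = 1 ∧ ‖y‖ • u = y := by
    rcases eq_or_ne y 0 with rfl | hy
    · exact ⟨e, he, by simp⟩
    · exact ⟨‖y‖⁻¹ • y, by simp [norm_smul, hy], by simp [smul_smul, hy]⟩
  have hprofile : (fun s : ℝ ↦ f (s • e)) = fun s ↦ f (s • u) :=
    funext fun s ↦ hf _ _ (by simp [norm_smul, he, hu])
  have hderiv : HasDerivAt (fun s : ℝ ↦ f (s • u)) (fderiv ℝ f y u) ‖y‖ := by
    have h := (hyu ▸ hfy).hasFDerivAt.comp_hasDerivAt ‖y‖ ((hasDerivAt_id ‖y‖).smul_const u)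
    simpa [hyu, Function.comp_def] using h
  rw [hprofile, hderiv.deriv]
  exact ((fderiv ℝ f y).le_opNorm u).trans_eq (by rw [hu, mul_one])

theorem norm_deriv_comp_smul_sq_le_sum {ι : Type*} [Fintype ι] (b : OrthonormalBasis ι ℝ V)
    {y : V} (hfy : DifferentiableAt ℝ f y) :
    ‖deriv (fun s : ℝ ↦ f (s • e)) ‖y‖‖ ^ 2 ≤ ∑ i, ‖fderiv ℝ f y (b i)‖ ^ 2 :=
  (pow_le_pow_left₀ (norm_nonneg _) (norm_deriv_comp_smul_le_norm_fderiv hf he hfy) 2).trans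
    ((fderiv ℝ f y).norm_sq_le_sum_norm_apply_sq b)

end Radial

theorem SchwartzMap.tendsto_apply_smul_atTop {V F : Type*} [NormedAddCommGroup V]
    [NormedSpace ℝ V] [ProperSpace V] [NormedAddCommGroup F] [NormedSpace ℝ F]
    (f : 𝓢(V, F)) {e : V} (he : e ≠ 0) : Tendsto (fun s : ℝ ↦ f (s • e)) atTop (𝓝 0) := by
  refine f.tendsto_cocompact.comp (tendsto_cocompact_of_tendsto_dist_comp_atTop 0 ?_)
  simp_rw [dist_zero_right, norm_smul]
  exact (tendsto_norm_atTop_atTop.comp tendsto_id).atTop_mul_const (norm_pos_iff.2 he)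

section RadialSchwartz

variable {V : Type*} [NormedAddCommGroup V] [InnerProductSpace ℝ V] [FiniteDimensional ℝ V]
  [MeasurableSpace V] [BorelSpace V]
  {H : Type*} [NormedAddCommGroup H] [InnerProductSpace ℂ H] [CompleteSpace H]
  (f : 𝓢(V, H)) (hf : ∀ x y : V, ‖x‖ = ‖y‖ → f x = f y) {e : V} (he : ‖e‖ = 1)
include hf he

theorem SchwartzMap.integrable_norm_deriv_radial_sq :
    Integrable (fun y : V ↦ ‖deriv (fun s : ℝ ↦ f (s • e)) ‖y‖‖ ^ 2) := by
  let b := stdOrthonormalBasis ℝ V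
  have hmeas : AEStronglyMeasurable (fun y : V ↦ ‖deriv (fun s : ℝ ↦ f (s • e)) ‖y‖‖ ^ 2) :=
    (((stronglyMeasurable_deriv _).comp_measurable measurable_norm).norm.pow 2).aestronglyMeasurable
  refine Integrable.mono' (integrable_finsetSum Finset.univ fun i _ ↦
      ((∂_{b i} f).memLp 2).integrable_norm_pow two_ne_zero) hmeas (.of_forall fun y ↦ ?_)
  rw [Real.norm_of_nonneg (by positivity)]
  exact norm_deriv_comp_smul_sq_le_sum hf he b f.differentiableAt

theorem SchwartzMap.integral_norm_deriv_radial_sq_le :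
    ∫ y : V, ‖deriv (fun s : ℝ ↦ f (s • e)) ‖y‖‖ ^ 2 ≤
      (2 * π) ^ 2 * ∫ ξ, ‖ξ‖ ^ 2 * ‖𝓕 f ξ‖ ^ 2 := by
  let b := stdOrthonormalBasis ℝ V
  have hint (i) : Integrable fun y ↦ ‖∂_{b i} f y‖ ^ 2 :=
    ((∂_{b i} f).memLp 2).integrable_norm_pow two_ne_zero
  rw [← f.sum_integral_norm_lineDerivOp_sq b, ← integral_finsetSum _ fun i _ ↦ hint i]
  exact integral_mono (f.integrable_norm_deriv_radial_sq hf he)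
    (integrable_finsetSum _ fun i _ ↦ hint i)
    fun y ↦ norm_deriv_comp_smul_sq_le_sum hf he b f.differentiableAt

theorem SchwartzMap.integrableOn_pow_mul_norm_deriv_radial_sq :
    IntegrableOn (fun s : ℝ ↦ s ^ (finrank ℝ V - 1) * ‖deriv (fun s : ℝ ↦ f (s • e)) s‖ ^ 2)
      (Ioi 0) := by
  have : Nontrivial V := nontrivial_of_ne e 0 (norm_ne_zero_iff.1 (by simp [he]))
  simpa only [smul_eq_mul] using (integrable_fun_norm_addHaar volume
    (f := fun s ↦ ‖deriv (fun s : ℝ ↦ f (s • e)) s‖ ^ 2)).1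
    (f.integrable_norm_deriv_radial_sq hf he)

theorem SchwartzMap.integral_pow_mul_norm_deriv_radial_sq_le :
    finrank ℝ V * volume.real (Metric.ball (0 : V) 1) *
        ∫ s in Ioi 0, s ^ (finrank ℝ V - 1) * ‖deriv (fun s : ℝ ↦ f (s • e)) s‖ ^ 2 ≤
      (2 * π) ^ 2 * ∫ ξ, ‖ξ‖ ^ 2 * ‖𝓕 f ξ‖ ^ 2 := by
  have : Nontrivial V := nontrivial_of_ne e 0 (norm_ne_zero_iff.1 (by simp [he]))
  have hpolar := integral_fun_norm_addHaar (volume : Measure V)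
    fun s ↦ ‖deriv (fun s : ℝ ↦ f (s • e)) s‖ ^ 2
  simp only [nsmul_eq_mul, smul_eq_mul] at hpolar
  rw [mul_assoc, ← hpolar]
  exact f.integral_norm_deriv_radial_sq_le hf he

end RadialSchwartz

/-- the radial Sobolev embedding `‖x‖ |f(x)|² ≤ C ‖f‖²_{Ḣ¹}` on `ℝ³`. -/
theorem stmt16 :
    ∃ C : ℝ, 0 < C ∧ ∀ f : SchwartzMap (Rd 3) ℂ,
      (∀ x y : Rd 3, ‖x‖ = ‖y‖ → f x = f y) →
      ∀ x : Rd 3, ‖x‖ * ‖f x‖ ^ 2 ≤ C * ∫ ξ : Rd 3, ‖ξ‖ ^ 2 * ‖FT (⇑f) ξ‖ ^ 2 := by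
  set κ := 3 * volume.real (Metric.ball (0 : Rd 3) 1)
  have hκ : 0 < κ := mul_pos three_pos
    (ENNReal.toReal_pos (Metric.measure_ball_pos volume 0 one_pos).ne' measure_ball_lt_top.ne)
  refine ⟨(2 * π) ^ 2 / κ, by positivity, fun f hf x ↦ ?_⟩
  set e : Rd 3 := EuclideanSpace.single 0 1
  have he : ‖e‖ = 1 := by simp [e]
  have hfx : f x = f (‖x‖ • e) := hf _ _ (by simp [norm_smul, he])
  have hint := f.integrableOn_pow_mul_norm_deriv_radial_sq hf he
  have hbound := f.integral_pow_mul_norm_deriv_radial_sq_le hf he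
  simp only [finrank_euclideanSpace_fin, Nat.reduceSub, Nat.cast_ofNat] at hint hbound
  rw [hfx, div_mul_eq_mul_div, le_div_iff₀ hκ]
  calc ‖x‖ * ‖f (‖x‖ • e)‖ ^ 2 * κ
      ≤ (∫ s in Ioi ‖x‖, s ^ 2 * ‖deriv (fun s : ℝ ↦ f (s • e)) s‖ ^ 2) * κ := by
        refine mul_le_mul_of_nonneg_right ?_ hκ.le
        exact mul_norm_sq_le_setIntegral_sq_mul_norm_deriv_sq
          (f.differentiable.comp (differentiable_id.smul_const e))
          (f.tendsto_apply_smul_atTop (norm_ne_zero_iff.1 (by simp [he]))) (norm_nonneg x)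
          (hint.mono_set (Ioi_subset_Ioi (norm_nonneg x)))
    _ ≤ (∫ s in Ioi 0, s ^ 2 * ‖deriv (fun s : ℝ ↦ f (s • e)) s‖ ^ 2) * κ := by
        refine mul_le_mul_of_nonneg_right ?_ hκ.le
        exact setIntegral_mono_set hint (.of_forall fun s ↦ by dsimp; positivity)
          (Ioi_subset_Ioi (norm_nonneg x)).eventuallyLE
    _ ≤ (2 * π) ^ 2 * ∫ ξ : Rd 3, ‖ξ‖ ^ 2 * ‖FT (⇑f) ξ‖ ^ 2 := by
        rw [mul_comm]
        exact hbound
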